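/- arXiv:1505.03063 — 2 statements merged into one kernel-verified Lean document; each statement's English description precedes it below -/
import Mathlib

section
/- Under the standing assumptions on the 3-block Bregman ADMM, for every k ≥ 1 the iterates satisfy the sufficient-descent inequality L̂(ŵ^{k+1}) ≤ L̂(ŵ^k) − σ₁( ‖x^{k+1}−x^k‖² + ‖y^{k+1}−y^k‖² + ‖z^{k+1}−z^k‖² ). -/
open RealInnerProductSpace Filter

noncomputable section

/-- Euclidean space `ℝ^n`. -/
abbrev Eu (n : ℕ) := EuclideanSpace ℝ (Fin n)

/-- The Bregman distance `Δ_φ(u,v) = φ(u) − φ(v) − ⟨∇φ(v), u−v⟩` associated with a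
differentiable function `φ` whose gradient is `φ'`. -/
def Breg {n : ℕ} (φ : Eu n → ℝ) (φ' : Eu n → Eu n) (u v : Eu n) : ℝ :=
  φ u - φ v - ⟪φ' v, u - v⟫

/-- `F` is `μ`-strongly convex iff `F − (μ/2)‖·‖²` is convex. -/
def StrongConvex {n : ℕ} (μ : ℝ) (F : Eu n → ℝ) : Prop :=
  ConvexOn ℝ Set.univ (fun u => F u - μ / 2 * ‖u‖ ^ 2)

/-- The augmented Lagrangian
`L_α(x,y,z,p) = f(x)+g(y)+h(z)+⟨p, Ax+By+Cz⟩+(α/2)‖Ax+By+Cz‖²`. -/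
def Lag {n₁ n₂ n₃ m : ℕ} (f : Eu n₁ → ℝ) (g : Eu n₂ → ℝ) (h : Eu n₃ → ℝ)
    (A : Eu n₁ →L[ℝ] Eu m) (B : Eu n₂ →L[ℝ] Eu m) (C : Eu n₃ →L[ℝ] Eu m)
    (α : ℝ) (x : Eu n₁) (y : Eu n₂) (z : Eu n₃) (p : Eu m) : ℝ :=
  f x + g y + h z + ⟪p, A x + B y + C z⟫ + α / 2 * ‖A x + B y + C z‖ ^ 2

/-- All the data and standing assumptions of the 3-block Bregman ADMM:
objective functions `f, g, h`, Bregman kernels `φ₁, φ₂, φ₃` (with gradients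
`φ₁', φ₂', φ₃'`, and `h'` the gradient of `h`), matrices `A, B, C` (as linear maps),
parameters, iterate sequences `x, y, z, p`, and the standing hypotheses
(lower semicontinuity of `f, g`; differentiability with Lipschitz gradients;
convexity of kernels; the strong-convexity alternatives; quantitative full row rank
of `C`; the lower bound on `α`; and the BADMM update rules, where each of the three
primal updates is a global minimizer of the corresponding subproblem). -/
structure BADMM (n₁ n₂ n₃ m : ℕ) where
  f : Eu n₁ → ℝ
  g : Eu n₂ → ℝ
  h : Eu n₃ → ℝ
  φ₁ : Eu n₁ → ℝ
  φ₂ : Eu n₂ → ℝ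
  φ₃ : Eu n₃ → ℝ
  h' : Eu n₃ → Eu n₃
  φ₁' : Eu n₁ → Eu n₁
  φ₂' : Eu n₂ → Eu n₂
  φ₃' : Eu n₃ → Eu n₃
  A : Eu n₁ →L[ℝ] Eu m
  B : Eu n₂ →L[ℝ] Eu m
  C : Eu n₃ →L[ℝ] Eu m
  α : ℝ
  ℓh : ℝ
  ℓ₁ : ℝ
  ℓ₂ : ℝ
  ℓ₃ : ℝ
  μ₁ : ℝ
  μ₂ : ℝ
  μ₃ : ℝ
  σC : ℝ
  x : ℕ → Eu n₁
  y : ℕ → Eu n₂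
  z : ℕ → Eu n₃
  p : ℕ → Eu m
  hα_pos : 0 < α
  hf_lsc : LowerSemicontinuous f
  hg_lsc : LowerSemicontinuous g
  hgrad_h : ∀ v, HasGradientAt h (h' v) v
  hgrad_φ₁ : ∀ v, HasGradientAt φ₁ (φ₁' v) v
  hgrad_φ₂ : ∀ v, HasGradientAt φ₂ (φ₂' v) v
  hgrad_φ₃ : ∀ v, HasGradientAt φ₃ (φ₃' v) v
  hℓh_nonneg : 0 ≤ ℓh
  hℓ₁_nonneg : 0 ≤ ℓ₁
  hℓ₂_nonneg : 0 ≤ ℓ₂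
  hℓ₃_nonneg : 0 ≤ ℓ₃
  hlip_h : ∀ a b, ‖h' a - h' b‖ ≤ ℓh * ‖a - b‖
  hlip_φ₁ : ∀ a b, ‖φ₁' a - φ₁' b‖ ≤ ℓ₁ * ‖a - b‖
  hlip_φ₂ : ∀ a b, ‖φ₂' a - φ₂' b‖ ≤ ℓ₂ * ‖a - b‖
  hlip_φ₃ : ∀ a b, ‖φ₃' a - φ₃' b‖ ≤ ℓ₃ * ‖a - b‖
  hφ₁_convex : ConvexOn ℝ Set.univ φ₁
  hφ₂_convex : ConvexOn ℝ Set.univ φ₂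
  hφ₃_convex : ConvexOn ℝ Set.univ φ₃
  hμ₁_pos : 0 < μ₁
  hμ₂_pos : 0 < μ₂
  hμ₃_pos : 0 < μ₃
  hsc₁ : StrongConvex μ₁ f ∨ StrongConvex μ₁ φ₁
  hsc₂ : StrongConvex μ₂ g ∨ StrongConvex μ₂ φ₂
  hsc₃ : StrongConvex μ₃ h ∨ StrongConvex μ₃ φ₃
  hσC_pos : 0 < σC
  hC_rank : ∀ u : Eu m, σC * ‖u‖ ^ 2 ≤ ‖(ContinuousLinearMap.adjoint C) u‖ ^ 2
  hα_large : 4 * ((ℓh + ℓ₃) ^ 2 + ℓ₃ ^ 2) / (μ₃ * σC) < α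
  hx_min : ∀ k, ∀ ξ : Eu n₁,
    Lag f g h A B C α (x (k+1)) (y k) (z k) (p k) + Breg φ₁ φ₁' (x (k+1)) (x k) ≤
      Lag f g h A B C α ξ (y k) (z k) (p k) + Breg φ₁ φ₁' ξ (x k)
  hy_min : ∀ k, ∀ ξ : Eu n₂,
    Lag f g h A B C α (x (k+1)) (y (k+1)) (z k) (p k) + Breg φ₂ φ₂' (y (k+1)) (y k) ≤
      Lag f g h A B C α (x (k+1)) ξ (z k) (p k) + Breg φ₂ φ₂' ξ (y k)
  hz_min : ∀ k, ∀ ξ : Eu n₃,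
    Lag f g h A B C α (x (k+1)) (y (k+1)) (z (k+1)) (p k) + Breg φ₃ φ₃' (z (k+1)) (z k) ≤
      Lag f g h A B C α (x (k+1)) (y (k+1)) ξ (p k) + Breg φ₃ φ₃' ξ (z k)
  hp_upd : ∀ k, p (k+1) = p k + α • (A (x (k+1)) + B (y (k+1)) + C (z (k+1)))

namespace BADMM

variable {n₁ n₂ n₃ m : ℕ} (P : BADMM n₁ n₂ n₃ m)

/-- `σ₀ = 2ℓ₃²/(ασ_C)`. -/
def σ0 : ℝ := 2 * P.ℓ₃ ^ 2 / (P.α * P.σC)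

/-- `σ₁ = (1/2)·min(μ₁, μ₂, μ₃ − 4(ℓ_h+ℓ₃)²/(ασ_C) − 4ℓ₃²/(ασ_C))`. -/
def σ1 : ℝ :=
  (1 / 2) * min P.μ₁ (min P.μ₂
    (P.μ₃ - 4 * (P.ℓh + P.ℓ₃) ^ 2 / (P.α * P.σC) - 4 * P.ℓ₃ ^ 2 / (P.α * P.σC)))

/-- The augmented Lagrangian of the problem, `L_α`. -/
def L (x : Eu n₁) (y : Eu n₂) (z : Eu n₃) (p : Eu m) : ℝ :=
  Lag P.f P.g P.h P.A P.B P.C P.α x y z p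

/-- `L̂(x,y,z,p,ẑ) = L_α(x,y,z,p) + σ₀‖z−ẑ‖²`. -/
def Lhat (x : Eu n₁) (y : Eu n₂) (z : Eu n₃) (p : Eu m) (zh : Eu n₃) : ℝ :=
  P.L x y z p + P.σ0 * ‖z - zh‖ ^ 2

/-- `‖w^{k+1}−w^k‖²`. -/
def dw2 (k : ℕ) : ℝ :=
  ‖P.x (k+1) - P.x k‖ ^ 2 + ‖P.y (k+1) - P.y k‖ ^ 2 +
    ‖P.z (k+1) - P.z k‖ ^ 2 + ‖P.p (k+1) - P.p k‖ ^ 2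

end BADMM

/-!
Each primal update is a Bregman-proximal step, so strong convexity of either the block objective
or its kernel makes the augmented Lagrangian drop by `μᵢ/2 ‖Δ‖²` in that block, while the dual
update raises it by `‖Δp‖²/α`. The optimality condition of the `z`-update expresses `Cᵀ p^{k+1}`
through `∇h` and `∇φ₃` at `z^k, z^{k+1}`; with the full row rank of `C` and the Lipschitz
gradients this bounds `‖Δp‖²` by the last two `z`-steps, and the term in the older step is
absorbed by `σ₀‖z − ẑ‖²` in `L̂`.
-/

open Set Topology

section InnerProductSpace

variable {E F : Type*} [NormedAddCommGroup E] [InnerProductSpace ℝ E]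
  [NormedAddCommGroup F] [InnerProductSpace ℝ F]

theorem convexOn_inner_add_norm_sq_comp (T : E →L[ℝ] F) (c p : F) {α : ℝ} (hα : 0 ≤ α) :
    ConvexOn ℝ univ (fun ξ => ⟪p, T ξ + c⟫ + α / 2 * ‖T ξ + c‖ ^ 2) := by
  have hK : ConvexOn ℝ univ (fun r : F => ⟪p, r⟫ + α / 2 * ‖r‖ ^ 2) :=
    ((innerₛₗ ℝ p).convexOn convex_univ).add
      ((convexOn_univ_norm.pow (fun _ _ => norm_nonneg _) 2).smul (by positivity : 0 ≤ α / 2))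
  convert (hK.translate_right c).comp_linearMap (T : E →ₗ[ℝ] F) using 1
  · simp
  · ext ξ
    simp [add_comm]

variable [CompleteSpace E]

theorem ConvexOn.add_inner_le_of_hasGradientAt {φ : E → ℝ} {g v : E} (hφ : ConvexOn ℝ univ φ)
    (hg : HasGradientAt φ g v) (u : E) : φ v + ⟪g, u - v⟫ ≤ φ u := by
  set ℓ : ℝ →ᵃ[ℝ] E := AffineMap.lineMap v u
  have hg' : HasFDerivAt φ (InnerProductSpace.toDual ℝ E g) (ℓ 0) := by
    simpa [ℓ] using hg.hasFDerivAt
  have hd : HasDerivAt (φ ∘ ℓ) ⟪g, u - v⟫ 0 := by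
    simpa using hg'.comp_hasDerivAt (0 : ℝ) AffineMap.hasDerivAt_lineMap
  have := (hφ.comp_affineMap ℓ).le_slope_of_hasDerivAt (mem_univ 0) (mem_univ 1) zero_lt_one hd
  simp [slope, ℓ] at this
  linarith

theorem HasGradientAt.add {f g : E → ℝ} {f' g' x : E} (hf : HasGradientAt f f' x)
    (hg : HasGradientAt g g' x) : HasGradientAt (fun y => f y + g y) (f' + g') x := by
  rw [hasGradientAt_iff_hasFDerivAt, map_add]
  exact hf.hasFDerivAt.add hg.hasFDerivAt

theorem IsLocalMin.hasGradientAt_eq_zero {f : E → ℝ} {f' a : E} (h : IsLocalMin f a)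
    (hf : HasGradientAt f f' a) : f' = 0 :=
  (InnerProductSpace.toDual ℝ E).map_eq_zero_iff.mp (h.hasFDerivAt_eq_zero hf.hasFDerivAt)

theorem hasGradientAt_inner_add_norm_sq_comp [CompleteSpace F] (T : E →L[ℝ] F) (c p : F)
    (α : ℝ) (w : E) :
    HasGradientAt (fun ξ => ⟪p, T ξ + c⟫ + α / 2 * ‖T ξ + c‖ ^ 2)
      (T.adjoint (p + α • (T w + c))) w := by
  have hT : HasFDerivAt (fun ξ => T ξ + c) T w := T.hasFDerivAt.add_const c
  rw [hasGradientAt_iff_hasFDerivAt]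
  refine (((innerSL ℝ p).hasFDerivAt.comp w hT).add
    (hT.norm_sq.const_mul (α / 2))).congr_fderiv ?_
  ext ξ
  simp [ContinuousLinearMap.adjoint_inner_left]
  ring

end InnerProductSpace

section Bregman

variable {n : ℕ} {φ : Eu n → ℝ} {φ' : Eu n → Eu n}

@[simp]
theorem Breg_self (φ : Eu n → ℝ) (φ' : Eu n → Eu n) (v : Eu n) : Breg φ φ' v v = 0 := by
  simp [Breg]

theorem Breg_nonneg (hφ : ConvexOn ℝ univ φ) {v : Eu n} (hg : HasGradientAt φ (φ' v) v)
    (u : Eu n) : 0 ≤ Breg φ φ' u v := by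
  have := hφ.add_inner_le_of_hasGradientAt hg u
  rw [Breg]
  linarith

theorem convexOn_Breg_left (hφ : ConvexOn ℝ univ φ) (v : Eu n) :
    ConvexOn ℝ univ (fun u => Breg φ φ' u v) := by
  have e : (fun u => Breg φ φ' u v) = fun u => φ u + (⟪-φ' v, u⟫ + (⟪φ' v, v⟫ - φ v)) := by
    ext u
    simp only [Breg, inner_sub_right, inner_neg_left]
    ring
  rw [e]
  exact hφ.add (((innerₛₗ ℝ (-φ' v)).convexOn convex_univ).add_const _)

theorem hasGradientAt_Breg_left {w : Eu n} (hg : HasGradientAt φ (φ' w) w) (v : Eu n) :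
    HasGradientAt (fun u => Breg φ φ' u v) (φ' w - φ' v) w := by
  rw [hasGradientAt_iff_hasFDerivAt]
  have hB := (hg.hasFDerivAt.sub_const (φ v)).sub
    ((innerSL ℝ (φ' v)).hasFDerivAt.sub_const ⟪φ' v, v⟫)
  refine (hB.congr_of_eventuallyEq ?_).congr_fderiv ?_
  · exact Filter.Eventually.of_forall fun u => by simp [Breg, inner_sub_right]
  · ext u
    simp

theorem StrongConvex.mul_norm_sub_sq_le_Breg {μ : ℝ} (hφ : StrongConvex μ φ) {v : Eu n}
    (hg : HasGradientAt φ (φ' v) v) (u : Eu n) : μ / 2 * ‖u - v‖ ^ 2 ≤ Breg φ φ' u v := by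
  have hG : HasGradientAt (fun u => φ u - μ / 2 * ‖u‖ ^ 2) (φ' v - μ • v) v := by
    rw [hasGradientAt_iff_hasFDerivAt]
    refine (hg.hasFDerivAt.sub ((hasStrictFDerivAt_norm_sq v).hasFDerivAt.const_mul (μ / 2)))
      |>.congr_fderiv ?_
    ext u
    simp [real_inner_comm]
    ring
  have := hφ.add_inner_le_of_hasGradientAt hG u
  simp only [inner_sub_left, real_inner_smul_left, inner_sub_right, real_inner_self_eq_norm_sq]
    at this
  rw [Breg, norm_sub_sq_real, inner_sub_right]
  rw [real_inner_comm u v] at this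
  linarith

theorem StrongConvex.add_mul_norm_sub_sq_le_of_isMinOn {μ : ℝ} {F : Eu n → ℝ}
    (hF : StrongConvex μ F) {w : Eu n} (hmin : IsMinOn F univ w) (u : Eu n) :
    F w + μ / 2 * ‖u - w‖ ^ 2 ≤ F u := by
  have key : ∀ t ∈ Ioc (0 : ℝ) 1, F w + μ / 2 * (1 - t) * ‖u - w‖ ^ 2 ≤ F u := by
    rintro t ⟨ht₀, ht₁⟩
    have hconv := (strongConvexOn_iff_convex.mpr hF).2 (mem_univ u) (mem_univ w) ht₀.le
      (sub_nonneg.2 ht₁) (add_sub_cancel t 1)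
    have hw := isMinOn_univ_iff.mp hmin (t • u + (1 - t) • w)
    simp only [smul_eq_mul] at hconv
    refine le_of_mul_le_mul_left ?_ ht₀
    nlinarith
  have hlim : Tendsto (fun t : ℝ => F w + μ / 2 * (1 - t) * ‖u - w‖ ^ 2) (𝓝[>] 0)
      (𝓝 (F w + μ / 2 * ‖u - w‖ ^ 2)) := by
    refine tendsto_nhdsWithin_of_tendsto_nhds (Continuous.tendsto' ?_ 0 _ (by simp))
    fun_prop
  exact le_of_tendsto hlim (Filter.mem_of_superset (Ioc_mem_nhdsGT zero_lt_one) key)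

theorem add_mul_norm_sub_sq_le_of_isMinOn_add_Breg {μ : ℝ} {Φ F : Eu n → ℝ} {v w : Eu n}
    (hΦ : ConvexOn ℝ univ (fun ξ => Φ ξ - F ξ)) (hφ : ConvexOn ℝ univ φ)
    (hg : ∀ u, HasGradientAt φ (φ' u) u)
    (hsc : StrongConvex μ F ∨ StrongConvex μ φ)
    (hmin : IsMinOn (fun ξ => Φ ξ + Breg φ φ' ξ v) univ w) :
    Φ w + μ / 2 * ‖w - v‖ ^ 2 ≤ Φ v := by
  have hv := isMinOn_univ_iff.mp hmin v
  simp only [Breg_self, add_zero] at hv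
  rcases hsc with hF | hφμ
  · have hΨ : StrongConvex μ (fun ξ => Φ ξ + Breg φ φ' ξ v) := by
      have e : (fun ξ => Φ ξ + Breg φ φ' ξ v - μ / 2 * ‖ξ‖ ^ 2)
          = fun ξ => (F ξ - μ / 2 * ‖ξ‖ ^ 2) + ((Φ ξ - F ξ) + Breg φ φ' ξ v) := by
        ext ξ
        ring
      rw [StrongConvex, e]
      exact hF.add (hΦ.add (convexOn_Breg_left hφ v))
    have := hΨ.add_mul_norm_sub_sq_le_of_isMinOn hmin v
    simp only [Breg_self, add_zero, norm_sub_rev v w] at this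
    linarith [Breg_nonneg hφ (hg v) w]
  · linarith [hφμ.mul_norm_sub_sq_le_Breg (hg v) w]

theorem add_sub_eq_zero_of_isMinOn_add_Breg {Φ : Eu n → ℝ} {Φ' v w : Eu n}
    (hΦ : HasGradientAt Φ Φ' w) (hg : HasGradientAt φ (φ' w) w)
    (hmin : IsMinOn (fun ξ => Φ ξ + Breg φ φ' ξ v) univ w) :
    Φ' + (φ' w - φ' v) = 0 :=
  (hmin.isLocalMin univ_mem).hasGradientAt_eq_zero (hΦ.add (hasGradientAt_Breg_left hg v))

end Bregman

section AugmentedLagrangian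

variable {n₁ n₂ n₃ m : ℕ} (f : Eu n₁ → ℝ) (g : Eu n₂ → ℝ) (h : Eu n₃ → ℝ)
  (A : Eu n₁ →L[ℝ] Eu m) (B : Eu n₂ →L[ℝ] Eu m) (C : Eu n₃ →L[ℝ] Eu m) {α : ℝ}

theorem convexOn_Lag_sub_f (hα : 0 ≤ α) (y : Eu n₂) (z : Eu n₃) (p : Eu m) :
    ConvexOn ℝ univ (fun ξ => Lag f g h A B C α ξ y z p - f ξ) := by
  have e : (fun ξ => Lag f g h A B C α ξ y z p - f ξ) = fun ξ =>
      ⟪p, A ξ + (B y + C z)⟫ + α / 2 * ‖A ξ + (B y + C z)‖ ^ 2 + (g y + h z) := by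
    ext ξ
    simp only [Lag, add_assoc]
    ring
  rw [e]
  exact (convexOn_inner_add_norm_sq_comp A _ p hα).add_const _

theorem convexOn_Lag_sub_g (hα : 0 ≤ α) (x : Eu n₁) (z : Eu n₃) (p : Eu m) :
    ConvexOn ℝ univ (fun ξ => Lag f g h A B C α x ξ z p - g ξ) := by
  have e : (fun ξ => Lag f g h A B C α x ξ z p - g ξ) = fun ξ =>
      ⟪p, B ξ + (A x + C z)⟫ + α / 2 * ‖B ξ + (A x + C z)‖ ^ 2 + (f x + h z) := by
    ext ξ
    rw [Lag, show A x + B ξ + C z = B ξ + (A x + C z) by abel]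
    ring
  rw [e]
  exact (convexOn_inner_add_norm_sq_comp B _ p hα).add_const _

theorem Lag_eq_h_add (x : Eu n₁) (y : Eu n₂) (ζ : Eu n₃) (p : Eu m) :
    Lag f g h A B C α x y ζ p =
      h ζ + (⟪p, C ζ + (A x + B y)⟫ + α / 2 * ‖C ζ + (A x + B y)‖ ^ 2 + (f x + g y)) := by
  rw [Lag, add_comm (A x + B y)]
  ring

theorem convexOn_Lag_sub_h (hα : 0 ≤ α) (x : Eu n₁) (y : Eu n₂) (p : Eu m) :
    ConvexOn ℝ univ (fun ξ => Lag f g h A B C α x y ξ p - h ξ) := by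
  simp only [Lag_eq_h_add, add_sub_cancel_left]
  exact (convexOn_inner_add_norm_sq_comp C _ p hα).add_const _

theorem hasGradientAt_Lag_h {h' w : Eu n₃} (hh : HasGradientAt h h' w) (x : Eu n₁) (y : Eu n₂)
    (p : Eu m) :
    HasGradientAt (fun ζ => Lag f g h A B C α x y ζ p)
      (h' + C.adjoint (p + α • (A x + B y + C w))) w := by
  simp only [Lag_eq_h_add, add_comm (A x + B y) (C w)]
  rw [hasGradientAt_iff_hasFDerivAt, map_add]
  exact hh.hasFDerivAt.add
    ((hasGradientAt_inner_add_norm_sq_comp C _ p α w).hasFDerivAt.add_const _)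

end AugmentedLagrangian

namespace BADMM

variable {n₁ n₂ n₃ m : ℕ} (P : BADMM n₁ n₂ n₃ m)

theorem x_update_descent (k : ℕ) :
    P.L (P.x (k+1)) (P.y k) (P.z k) (P.p k) + P.μ₁ / 2 * ‖P.x (k+1) - P.x k‖ ^ 2 ≤
      P.L (P.x k) (P.y k) (P.z k) (P.p k) :=
  add_mul_norm_sub_sq_le_of_isMinOn_add_Breg (Φ := fun ξ => P.L ξ (P.y k) (P.z k) (P.p k))
    (convexOn_Lag_sub_f _ _ _ _ _ _ P.hα_pos.le _ _ _)
    P.hφ₁_convex P.hgrad_φ₁ P.hsc₁ (isMinOn_univ_iff.mpr (P.hx_min k))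

theorem y_update_descent (k : ℕ) :
    P.L (P.x (k+1)) (P.y (k+1)) (P.z k) (P.p k) + P.μ₂ / 2 * ‖P.y (k+1) - P.y k‖ ^ 2 ≤
      P.L (P.x (k+1)) (P.y k) (P.z k) (P.p k) :=
  add_mul_norm_sub_sq_le_of_isMinOn_add_Breg (Φ := fun ξ => P.L (P.x (k+1)) ξ (P.z k) (P.p k))
    (convexOn_Lag_sub_g _ _ _ _ _ _ P.hα_pos.le _ _ _)
    P.hφ₂_convex P.hgrad_φ₂ P.hsc₂ (isMinOn_univ_iff.mpr (P.hy_min k))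

theorem z_update_descent (k : ℕ) :
    P.L (P.x (k+1)) (P.y (k+1)) (P.z (k+1)) (P.p k) + P.μ₃ / 2 * ‖P.z (k+1) - P.z k‖ ^ 2 ≤
      P.L (P.x (k+1)) (P.y (k+1)) (P.z k) (P.p k) :=
  add_mul_norm_sub_sq_le_of_isMinOn_add_Breg (Φ := fun ξ => P.L (P.x (k+1)) (P.y (k+1)) ξ (P.p k))
    (convexOn_Lag_sub_h _ _ _ _ _ _ P.hα_pos.le _ _ _)
    P.hφ₃_convex P.hgrad_φ₃ P.hsc₃ (isMinOn_univ_iff.mpr (P.hz_min k))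

theorem adjoint_C_p_succ (k : ℕ) :
    P.C.adjoint (P.p (k+1)) = P.φ₃' (P.z k) - P.φ₃' (P.z (k+1)) - P.h' (P.z (k+1)) := by
  have hopt := add_sub_eq_zero_of_isMinOn_add_Breg
    (hasGradientAt_Lag_h P.f P.g P.h P.A P.B P.C (P.hgrad_h (P.z (k+1))) (P.x (k+1)) (P.y (k+1))
      (P.p k)) (P.hgrad_φ₃ (P.z (k+1))) (isMinOn_univ_iff.mpr (P.hz_min k))
  rw [← P.hp_upd k] at hopt
  linear_combination (norm := module) hopt

theorem σC_mul_norm_p_sub_sq_le (k : ℕ) :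
    P.σC * ‖P.p (k+2) - P.p (k+1)‖ ^ 2 ≤
      2 * (P.ℓh + P.ℓ₃) ^ 2 * ‖P.z (k+2) - P.z (k+1)‖ ^ 2 +
        2 * P.ℓ₃ ^ 2 * ‖P.z (k+1) - P.z k‖ ^ 2 := by
  set a := ‖P.z (k+2) - P.z (k+1)‖
  set b := ‖P.z (k+1) - P.z k‖
  have hCΔp : P.C.adjoint (P.p (k+2) - P.p (k+1)) =
      -(P.φ₃' (P.z (k+2)) - P.φ₃' (P.z (k+1))) - (P.h' (P.z (k+2)) - P.h' (P.z (k+1))) +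
        (P.φ₃' (P.z (k+1)) - P.φ₃' (P.z k)) := by
    rw [map_sub, P.adjoint_C_p_succ (k+1), P.adjoint_C_p_succ k]
    abel
  have hnorm : ‖P.C.adjoint (P.p (k+2) - P.p (k+1))‖ ≤ (P.ℓh + P.ℓ₃) * a + P.ℓ₃ * b := by
    rw [hCΔp]
    refine (norm_add_le _ _).trans ?_
    have := norm_sub_le (-(P.φ₃' (P.z (k+2)) - P.φ₃' (P.z (k+1))))
      (P.h' (P.z (k+2)) - P.h' (P.z (k+1)))
    rw [norm_neg] at this
    linarith [P.hlip_φ₃ (P.z (k+2)) (P.z (k+1)), P.hlip_h (P.z (k+2)) (P.z (k+1)),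
      P.hlip_φ₃ (P.z (k+1)) (P.z k)]
  have hsq := pow_le_pow_left₀ (norm_nonneg _) hnorm 2
  nlinarith [P.hC_rank (P.p (k+2) - P.p (k+1)), sq_nonneg ((P.ℓh + P.ℓ₃) * a - P.ℓ₃ * b)]

theorem L_p_succ (k : ℕ) :
    P.L (P.x (k+1)) (P.y (k+1)) (P.z (k+1)) (P.p (k+1)) =
      P.L (P.x (k+1)) (P.y (k+1)) (P.z (k+1)) (P.p k) + ‖P.p (k+1) - P.p k‖ ^ 2 / P.α := by
  simp only [L, Lag]
  rw [P.hp_upd k, add_sub_cancel_left, inner_add_left, real_inner_smul_left,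
    real_inner_self_eq_norm_sq, norm_smul, Real.norm_of_nonneg P.hα_pos.le]
  field_simp
  ring

theorem L_p_succ_le (k : ℕ) :
    P.L (P.x (k+2)) (P.y (k+2)) (P.z (k+2)) (P.p (k+2)) ≤
      P.L (P.x (k+2)) (P.y (k+2)) (P.z (k+2)) (P.p (k+1)) +
        2 * (P.ℓh + P.ℓ₃) ^ 2 / (P.α * P.σC) * ‖P.z (k+2) - P.z (k+1)‖ ^ 2 +
          P.σ0 * ‖P.z (k+1) - P.z k‖ ^ 2 := by
  have hασ := mul_pos P.hα_pos P.hσC_pos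
  have hbound : ‖P.p (k+2) - P.p (k+1)‖ ^ 2 / P.α ≤
      (2 * (P.ℓh + P.ℓ₃) ^ 2 * ‖P.z (k+2) - P.z (k+1)‖ ^ 2 +
        2 * P.ℓ₃ ^ 2 * ‖P.z (k+1) - P.z k‖ ^ 2) / (P.α * P.σC) := by
    rw [div_le_div_iff₀ P.hα_pos hασ]
    linarith [mul_le_mul_of_nonneg_left (P.σC_mul_norm_p_sub_sq_le k) P.hα_pos.le]
  calc P.L (P.x (k+2)) (P.y (k+2)) (P.z (k+2)) (P.p (k+2))
      = P.L (P.x (k+2)) (P.y (k+2)) (P.z (k+2)) (P.p (k+1)) +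
          ‖P.p (k+2) - P.p (k+1)‖ ^ 2 / P.α := P.L_p_succ (k+1)
    _ ≤ P.L (P.x (k+2)) (P.y (k+2)) (P.z (k+2)) (P.p (k+1)) +
          (2 * (P.ℓh + P.ℓ₃) ^ 2 * ‖P.z (k+2) - P.z (k+1)‖ ^ 2 +
            2 * P.ℓ₃ ^ 2 * ‖P.z (k+1) - P.z k‖ ^ 2) / (P.α * P.σC) := by gcongr
    _ = _ := by rw [σ0]; ring

theorem σ1_mul_add_le {a b c : ℝ} (ha : 0 ≤ a) (hb : 0 ≤ b) (hc : 0 ≤ c) :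
    P.σ1 * (a + b + c) ≤
      P.μ₁ / 2 * a + P.μ₂ / 2 * b +
        (P.μ₃ / 2 - 2 * (P.ℓh + P.ℓ₃) ^ 2 / (P.α * P.σC) - P.σ0) * c := by
  rw [σ1, σ0]
  set M := min P.μ₂ (P.μ₃ - 4 * (P.ℓh + P.ℓ₃) ^ 2 / (P.α * P.σC) - 4 * P.ℓ₃ ^ 2 / (P.α * P.σC))
  have h₁ := mul_le_mul_of_nonneg_right (min_le_left P.μ₁ M) ha
  have h₂ := mul_le_mul_of_nonneg_right ((min_le_right P.μ₁ M).trans (min_le_left _ _)) hb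
  have h₃ := mul_le_mul_of_nonneg_right ((min_le_right P.μ₁ M).trans (min_le_right _ _)) hc
  linear_combination (h₁ + h₂ + h₃) / 2

end BADMM

/-- sufficient descent of `L̂` along the BADMM iterates. -/
theorem badmm_sufficient_descent {n₁ n₂ n₃ m : ℕ} (P : BADMM n₁ n₂ n₃ m) :
    ∀ k : ℕ, 1 ≤ k →
      P.Lhat (P.x (k+1)) (P.y (k+1)) (P.z (k+1)) (P.p (k+1)) (P.z k) ≤
        P.Lhat (P.x k) (P.y k) (P.z k) (P.p k) (P.z (k-1)) -
          P.σ1 * (‖P.x (k+1) - P.x k‖ ^ 2 + ‖P.y (k+1) - P.y k‖ ^ 2 +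
            ‖P.z (k+1) - P.z k‖ ^ 2) := by
  intro k hk
  obtain ⟨j, rfl⟩ := Nat.exists_eq_add_of_le' hk
  have hx := P.x_update_descent (j+1)
  have hy := P.y_update_descent (j+1)
  have hz := P.z_update_descent (j+1)
  have hp := P.L_p_succ_le j
  have hσ1 := P.σ1_mul_add_le (sq_nonneg ‖P.x (j+2) - P.x (j+1)‖)
    (sq_nonneg ‖P.y (j+2) - P.y (j+1)‖) (sq_nonneg ‖P.z (j+2) - P.z (j+1)‖)
  simp only [BADMM.Lhat, Nat.add_sub_cancel, add_assoc, Nat.reduceAdd] at hx hy hz ⊢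
  linarith
end
end

section
/- Under the standing assumptions on the 3-block Bregman ADMM, for every k ≥ 1 the iterates satisfy ‖p^{k+1}−p^k‖² ≤ ( 2(ℓ_h+ℓ₃)²/σ_C )‖z^{k+1}−z^k‖² + ( 2ℓ₃²/σ_C )‖z^k−z^{k−1}‖². -/
open RealInnerProductSpace Filter

noncomputable section

lemma BADMM.foc {n₁ n₂ n₃ m : ℕ} (P : BADMM n₁ n₂ n₃ m) (k : ℕ) :
    P.h' (P.z (k+1)) + P.φ₃' (P.z (k+1)) - P.φ₃' (P.z k)
      + (ContinuousLinearMap.adjoint P.C) (P.p (k+1)) = 0 := by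
  set zp := P.z (k+1) with hzp
  set zk := P.z k with hzk
  set c := P.A (P.x (k+1)) + P.B (P.y (k+1)) with hc
  set pk := P.p k with hpk
  set G : Eu n₃ → ℝ := fun ξ =>
    Lag P.f P.g P.h P.A P.B P.C P.α (P.x (k+1)) (P.y (k+1)) ξ pk
      + Breg P.φ₃ P.φ₃' ξ zk with hG
  have hmin : IsLocalMin G zp := Filter.Eventually.of_forall (fun ξ => P.hz_min k ξ)
  have hGeq : G = fun ξ =>
      (P.h ξ + ⟪pk, c + P.C ξ⟫ + P.α / 2 * ‖c + P.C ξ‖ ^ 2 + P.φ₃ ξ - ⟪P.φ₃' zk, ξ⟫)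
        + (P.f (P.x (k+1)) + P.g (P.y (k+1)) - P.φ₃ zk + ⟪P.φ₃' zk, zk⟫) := by
    funext ξ
    simp only [hG, Lag, Breg, inner_sub_right, hc, add_assoc]
    ring
  have hD : HasFDerivAt G
      ((((InnerProductSpace.toDual ℝ (Eu n₃) (P.h' zp) + (innerSL ℝ pk).comp P.C)
        + (P.α/2) • (2 • (innerSL ℝ (c + P.C zp)).comp P.C))
        + InnerProductSpace.toDual ℝ (Eu n₃) (P.φ₃' zp)) - innerSL ℝ (P.φ₃' zk)) zp := by
    rw [hGeq]
    exact (((((P.hgrad_h zp).hasFDerivAt.add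
      ((innerSL ℝ pk).hasFDerivAt.comp zp (P.C.hasFDerivAt.const_add c))).add
      (((P.C.hasFDerivAt.const_add c).norm_sq).const_mul (P.α/2))).add
      (P.hgrad_φ₃ zp).hasFDerivAt).sub (innerSL ℝ (P.φ₃' zk)).hasFDerivAt).add_const _
  have hD0 := hmin.hasFDerivAt_eq_zero hD
  set v := P.h' zp + P.φ₃' zp - P.φ₃' zk + (ContinuousLinearMap.adjoint P.C) (P.p (k+1))
    with hv
  have hvw : ∀ w : Eu n₃, ⟪v, w⟫ = 0 := by
    intro w
    have h0 := ContinuousLinearMap.ext_iff.mp hD0 w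
    have hp1 : P.p (k+1) = pk + P.α • (c + P.C zp) := by
      rw [P.hp_upd k, hpk, hc, hzp, add_assoc]
    simp only [ContinuousLinearMap.add_apply, ContinuousLinearMap.sub_apply,
      ContinuousLinearMap.smul_apply, ContinuousLinearMap.coe_smul',
      ContinuousLinearMap.comp_apply, innerSL_apply_apply, InnerProductSpace.toDual_apply_apply,
      ContinuousLinearMap.zero_apply, smul_eq_mul, Pi.smul_apply, nsmul_eq_mul,
      inner_add_left, Nat.cast_ofNat] at h0
    rw [hv, hp1]
    simp only [inner_add_left, inner_sub_left, ContinuousLinearMap.adjoint_inner_left,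
      inner_add_left, real_inner_smul_left]
    ring_nf
    ring_nf at h0
    linarith
  exact inner_self_eq_zero.mp (hvw v)


/-- bound on the successive dual differences (Lemma 3.1 of the paper). -/
theorem badmm_dual_diff_sq_bound {n₁ n₂ n₃ m : ℕ} (P : BADMM n₁ n₂ n₃ m) :
    ∀ k : ℕ, 1 ≤ k →
      ‖P.p (k+1) - P.p k‖ ^ 2 ≤
        (2 * (P.ℓh + P.ℓ₃) ^ 2 / P.σC) * ‖P.z (k+1) - P.z k‖ ^ 2 +
          (2 * P.ℓ₃ ^ 2 / P.σC) * ‖P.z k - P.z (k-1)‖ ^ 2 := by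
  intro k hk
  obtain ⟨j, rfl⟩ : ∃ j, k = j + 1 := ⟨k - 1, (Nat.succ_pred_eq_of_pos hk).symm⟩
  have e1 := P.foc (j+1)
  have e2 := P.foc j
  set z0 := P.z j
  set z1 := P.z (j+1)
  set z2 := P.z (j+1+1)
  set d := P.p (j+1+1) - P.p (j+1) with hd
  have hsub : (ContinuousLinearMap.adjoint P.C) d =
      (P.h' z1 - P.h' z2) + (P.φ₃' z1 - P.φ₃' z2) + (P.φ₃' z1 - P.φ₃' z0) := by
    rw [hd, map_sub, ← sub_eq_zero]
    have e3 : (P.h' z2 + P.φ₃' z2 - P.φ₃' z1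
          + (ContinuousLinearMap.adjoint P.C) (P.p (j+1+1)))
        - (P.h' z1 + P.φ₃' z1 - P.φ₃' z0
          + (ContinuousLinearMap.adjoint P.C) (P.p (j+1))) = 0 := by
      rw [e1, e2, sub_zero]
    rw [← e3]
    abel
  have hn : ‖(ContinuousLinearMap.adjoint P.C) d‖ ≤
      (P.ℓh + P.ℓ₃) * ‖z2 - z1‖ + P.ℓ₃ * ‖z1 - z0‖ := by
    rw [hsub]
    calc ‖(P.h' z1 - P.h' z2) + (P.φ₃' z1 - P.φ₃' z2) + (P.φ₃' z1 - P.φ₃' z0)‖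
        ≤ ‖P.h' z1 - P.h' z2‖ + ‖P.φ₃' z1 - P.φ₃' z2‖ + ‖P.φ₃' z1 - P.φ₃' z0‖ :=
          norm_add₃_le
      _ ≤ P.ℓh * ‖z1 - z2‖ + P.ℓ₃ * ‖z1 - z2‖ + P.ℓ₃ * ‖z1 - z0‖ := by
          gcongr
          exacts [P.hlip_h z1 z2, P.hlip_φ₃ z1 z2, P.hlip_φ₃ z1 z0]
      _ = (P.ℓh + P.ℓ₃) * ‖z2 - z1‖ + P.ℓ₃ * ‖z1 - z0‖ := by
          rw [norm_sub_rev z1 z2]; ring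
  have key : P.σC * ‖d‖ ^ 2 ≤
      2 * (P.ℓh + P.ℓ₃) ^ 2 * ‖z2 - z1‖ ^ 2 + 2 * P.ℓ₃ ^ 2 * ‖z1 - z0‖ ^ 2 := by
    have h1 := P.hC_rank d
    have h2 : ‖(ContinuousLinearMap.adjoint P.C) d‖ ^ 2 ≤
        ((P.ℓh + P.ℓ₃) * ‖z2 - z1‖ + P.ℓ₃ * ‖z1 - z0‖) ^ 2 :=
      pow_le_pow_left₀ (norm_nonneg _) hn 2
    nlinarith [sq_nonneg ((P.ℓh + P.ℓ₃) * ‖z2 - z1‖ - P.ℓ₃ * ‖z1 - z0‖)]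
  have hσ := P.hσC_pos
  have hj : j + 1 - 1 = j := rfl
  rw [hj]
  rw [div_mul_eq_mul_div, div_mul_eq_mul_div, ← add_div, le_div_iff₀ hσ]
  nlinarith [key]
end
end
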